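/- Let f ∈ ℍ[X] and λ ∈ ℍ \ ℝ. Then λ is a spherical root of f if and only if there exists g ∈ ℍ[X] such that f = g · (X² − (tr λ : ℍ)·X + (n λ : ℍ)), i.e., f is a left multiple of the characteristic polynomial p_λ of λ. -/

import Mathlib

open Polynomial

/-- A spherical root of `f ∈ ℍ[X]`: a non-real `λ` such that every root of the
characteristic polynomial `p_λ(x) = x² − tr(λ)x + n(λ)` of `λ` is a root of `f`. -/
def SphericalRoot (f : Polynomial (Quaternion ℝ)) (lam : Quaternion ℝ) : Prop :=
  lam ∉ Set.range (algebraMap ℝ (Quaternion ℝ)) ∧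
    ∀ r : Quaternion ℝ,
      r ^ 2 - (2 * lam.re) • r + ((Quaternion.normSq lam : ℝ) : Quaternion ℝ) = 0 →
        Polynomial.eval r f = 0

/-!
A polynomial `p` with central coefficients commutes with every polynomial, so evaluation is
multiplicative on left multiples `g * p` and right division by `p` has a remainder that agrees
with `f` at every root of `p`. When `p` is monic quadratic the remainder has degree at most one,
and a degree-one polynomial over a ring without zero divisors vanishing at two distinct points is
zero. For `p = p_λ` the two points are `λ` and its conjugate, which differ because `λ` is not real.
-/

namespace Polynomial

variable {K A : Type*} [CommRing K] [Ring A] [Algebra K A]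

theorem commute_map_algebraMap (p : K[X]) (g : A[X]) :
    Commute (p.map (algebraMap K A)) g := by
  induction p using Polynomial.induction_on' with
  | add p q hp hq => simpa only [Polynomial.map_add] using hp.add_left hq
  | monomial n a =>
    rw [← C_mul_X_pow_eq_monomial, Polynomial.map_mul, map_C, Polynomial.map_pow, map_X,
      ← Polynomial.algebraMap_apply]
    exact (Algebra.commute_algebraMap_left a g).mul_left (commute_X_pow g n)

theorem eval_mul_map_algebraMap (g : A[X]) (p : K[X]) (x : A) :
    (g * p.map (algebraMap K A)).eval x = g.eval x * aeval x p := by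
  rw [eval, eval₂_mul_noncomm _ _ fun k => by rw [coeff_map]; exact Algebra.commutes _ x,
    ← eval, ← eval, eval_map_algebraMap]

theorem eq_zero_of_degree_le_one_of_eval_eq_zero [NoZeroDivisors A] {r : A[X]}
    (hdeg : r.degree ≤ 1) {x y : A} (hxy : x ≠ y) (hx : r.eval x = 0) (hy : r.eval y = 0) :
    r = 0 := by
  rw [eq_X_add_C_of_degree_le_one hdeg] at hx hy ⊢
  simp only [eval_add, eval_C_mul, eval_C, eval_X] at hx hy
  have hc₁ : r.coeff 1 = 0 := by
    have : r.coeff 1 * (x - y) = 0 := by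
      rw [mul_sub, sub_eq_zero]; exact add_right_cancel (hx.trans hy.symm)
    exact (mul_eq_zero.mp this).resolve_right (sub_ne_zero.mpr hxy)
  rw [hc₁, zero_mul, zero_add] at hx
  rw [hc₁, hx, C_0, zero_mul, zero_add]

theorem forall_eval_eq_zero_iff_exists_eq_mul_map [NoZeroDivisors A] {p : K[X]} (hp : p.Monic)
    (hdeg : p.natDegree = 2) {x y : A} (hxy : x ≠ y) (hx : aeval x p = 0) (hy : aeval y p = 0)
    (f : A[X]) :
    (∀ r : A, aeval r p = 0 → f.eval r = 0) ↔ ∃ g : A[X], f = g * p.map (algebraMap K A) := by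
  have : Nontrivial A := nontrivial_of_ne x y hxy
  set q := p.map (algebraMap K A)
  constructor
  · intro hroots
    have hq : q.Monic := hp.map _
    have hdecomp : f %ₘ q + f /ₘ q * q = f := by
      rw [← (commute_map_algebraMap p _).eq]; exact modByMonic_add_div f q
    have hrem_eval : ∀ r, aeval r p = 0 → (f %ₘ q).eval r = 0 := fun r hr => by
      have hfr := hroots r hr
      rwa [← hdecomp, eval_add, eval_mul_map_algebraMap, hr, mul_zero, add_zero] at hfr
    have hrem_deg : (f %ₘ q).degree ≤ 1 := by
      have := degree_modByMonic_lt f hq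
      rw [degree_eq_natDegree hq.ne_zero, hp.natDegree_map, hdeg] at this
      exact Order.le_of_lt_succ this
    rw [eq_zero_of_degree_le_one_of_eval_eq_zero hrem_deg hxy
      (hrem_eval x hx) (hrem_eval y hy), zero_add] at hdecomp
    exact ⟨f /ₘ q, hdecomp.symm⟩
  · rintro ⟨g, rfl⟩ r hr
    rw [eval_mul_map_algebraMap, hr, mul_zero]

end Polynomial

namespace Quaternion

open scoped Quaternion

variable {R : Type*} [CommRing R]

noncomputable def charpoly (a : ℍ[R]) : R[X] :=
  X ^ 2 - C (2 * a.re) * X + C (normSq a)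

theorem charpoly_monic [Nontrivial R] (a : ℍ[R]) : a.charpoly.Monic := by
  unfold charpoly; monicity!

theorem natDegree_charpoly [Nontrivial R] (a : ℍ[R]) : a.charpoly.natDegree = 2 := by
  unfold charpoly; compute_degree!

theorem charpoly_star (a : ℍ[R]) : (star a).charpoly = a.charpoly := by
  rw [charpoly, charpoly, re_star, normSq_star]

theorem aeval_charpoly (a r : ℍ[R]) :
    aeval r a.charpoly = r ^ 2 - (2 * a.re) • r + ((normSq a : R) : ℍ[R]) := by
  simp [charpoly, Algebra.smul_def, algebraMap_def]

theorem map_charpoly (a : ℍ[R]) :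
    a.charpoly.map (algebraMap R ℍ[R]) =
      X ^ 2 - C ((2 * a.re : R) : ℍ[R]) * X + C ((normSq a : R) : ℍ[R]) := by
  simp [charpoly, algebraMap_def]

theorem aeval_self_charpoly (a : ℍ[R]) : aeval a a.charpoly = 0 := by
  rw [aeval_charpoly, ← coe_mul_eq_smul, ← self_add_star', ← star_mul_self]
  noncomm_ring

theorem aeval_star_charpoly (a : ℍ[R]) : aeval (star a) a.charpoly = 0 := by
  rw [← charpoly_star, aeval_self_charpoly]

end Quaternion

theorem spherical_root_iff_left_multiple_of_char_poly
    (f : Polynomial (Quaternion ℝ)) (lam : Quaternion ℝ)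
    (hlam : lam ∉ Set.range (algebraMap ℝ (Quaternion ℝ))) :
    SphericalRoot f lam ↔
      ∃ g : Polynomial (Quaternion ℝ),
        f = g * (X ^ 2 - C (((2 * lam.re : ℝ) : Quaternion ℝ)) * X +
          C (((Quaternion.normSq lam : ℝ) : Quaternion ℝ))) := by
  have hne : lam ≠ star lam := fun h => hlam ⟨lam.re, (Quaternion.star_eq_self.mp h.symm).symm⟩
  rw [← Quaternion.map_charpoly, ← forall_eval_eq_zero_iff_exists_eq_mul_map
    lam.charpoly_monic lam.natDegree_charpoly hne lam.aeval_self_charpoly lam.aeval_star_charpoly]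
  simp only [SphericalRoot, Quaternion.aeval_charpoly, hlam, not_false_eq_true, true_and]
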